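/- arXiv:1807.11288 — 4 statements merged into one kernel-verified Lean document; each statement's English description precedes it below -/
import Mathlib

section
/- (Recursive feasibility under the tail disturbance update.) Assume X_f ⊆ 𝕏 and that X_f is control invariant for the disturbance w(N−1), i.e., for every y ∈ X_f there exists v ∈ 𝕌 with A y + B v + w(N−1) ∈ X_f. Let x ∈ 𝒳_N(w) and let u = (u(0),…,u(N−1)) be any admissible control sequence for (x, w). Then the successor state x⁺ = A x + B u(0) + w(0) satisfies x⁺ ∈ 𝒳_N(T(w)), where T(w) is the tail of w. -/
open Matrix

/-- A control sequence `u` is admissible for `(x, w)` over horizon `N`: there is a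
state trajectory `φ` with `φ 0 = x`, obeying the perturbed dynamics
`φ(i+1) = A φ(i) + B u(i) + w(i)`, state and input constraints for `i < N`, and
the terminal constraint `φ N ∈ Xf`. -/
def AdmissibleSeq (n m N : ℕ) (A : Matrix (Fin n) (Fin n) ℝ)
    (B : Matrix (Fin n) (Fin m) ℝ) (𝕏 : Set (Fin n → ℝ)) (𝕌 : Set (Fin m → ℝ))
    (Xf : Set (Fin n → ℝ)) (x : Fin n → ℝ) (w : ℕ → (Fin n → ℝ))
    (u : ℕ → (Fin m → ℝ)) : Prop :=
  ∃ φ : ℕ → (Fin n → ℝ), φ 0 = x ∧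
    (∀ i < N, φ (i + 1) = A.mulVec (φ i) + B.mulVec (u i) + w i) ∧
    (∀ i < N, φ i ∈ 𝕏) ∧ (∀ i < N, u i ∈ 𝕌) ∧ φ N ∈ Xf

/-- The `N`-step feasible set `𝒳_N(w)`. -/
def FeasSet (n m N : ℕ) (A : Matrix (Fin n) (Fin n) ℝ)
    (B : Matrix (Fin n) (Fin m) ℝ) (𝕏 : Set (Fin n → ℝ)) (𝕌 : Set (Fin m → ℝ))
    (Xf : Set (Fin n → ℝ)) (w : ℕ → (Fin n → ℝ)) : Set (Fin n → ℝ) :=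
  {x | x ∈ 𝕏 ∧ ∃ u : ℕ → (Fin m → ℝ), AdmissibleSeq n m N A B 𝕏 𝕌 Xf x w u}

/-- The tail `T(w)` of a disturbance sequence: `T(w)(i) = w(i+1)` for `i < N-1` and
`T(w)(N-1) = w(N-1)`. -/
def tailSeq (n N : ℕ) (w : ℕ → (Fin n → ℝ)) : ℕ → (Fin n → ℝ) :=
  fun i => if i < N - 1 then w (i + 1) else w (N - 1)

/-- **Proposition 2(i): recursive feasibility under the tail disturbance update.**
If `Xf ⊆ 𝕏` and `Xf` is control invariant for the disturbance `w(N-1)`, then for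
any `x ∈ 𝒳_N(w)` and any admissible control sequence `u` for `(x, w)`, the
successor state `x⁺ = A x + B u(0) + w(0)` lies in `𝒳_N(T(w))`. -/
theorem recursive_feasibility_tail_update
    (n m N : ℕ) (hN : 1 ≤ N)
    (A : Matrix (Fin n) (Fin n) ℝ) (B : Matrix (Fin n) (Fin m) ℝ)
    (𝕏 : Set (Fin n → ℝ)) (𝕌 : Set (Fin m → ℝ)) (Xf : Set (Fin n → ℝ))
    (w : ℕ → (Fin n → ℝ))
    (hXf𝕏 : Xf ⊆ 𝕏)
    (hci : ∀ y ∈ Xf, ∃ v ∈ 𝕌, A.mulVec y + B.mulVec v + w (N - 1) ∈ Xf)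
    (x : Fin n → ℝ) (hx : x ∈ FeasSet n m N A B 𝕏 𝕌 Xf w)
    (u : ℕ → (Fin m → ℝ)) (hu : AdmissibleSeq n m N A B 𝕏 𝕌 Xf x w u) :
    A.mulVec x + B.mulVec (u 0) + w 0 ∈
      FeasSet n m N A B 𝕏 𝕌 Xf (tailSeq n N w) := by
  obtain ⟨φ, hφ0, hdyn, hst, hin, hterm⟩ := hu
  obtain ⟨v, hv𝕌, hvXf⟩ := hci (φ N) hterm
  set u' : ℕ → (Fin m → ℝ) := fun i => if i < N - 1 then u (i + 1) else v with hu'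
  set φ' : ℕ → (Fin n → ℝ) := fun i =>
    if i < N then φ (i + 1) else A.mulVec (φ N) + B.mulVec v + w (N - 1) with hφ'
  have key : φ 1 = A.mulVec x + B.mulVec (u 0) + w 0 := by
    rw [hdyn 0 hN, hφ0]
  constructor
  · rw [← key]
    rcases lt_or_eq_of_le hN with h | h
    · exact hst 1 h
    · have : φ 1 = φ N := by rw [← h]
      rw [this]; exact hXf𝕏 hterm
  · refine ⟨u', φ', ?_, ?_, ?_, ?_, ?_⟩
    · simp only [hφ', if_pos (Nat.lt_of_lt_of_le Nat.zero_lt_one hN)]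
      exact key
    · intro i hi
      simp only [hφ', hu', tailSeq]
      rcases lt_or_ge (i + 1) N with h | h
      · have hi1 : i < N - 1 := Nat.lt_sub_of_add_lt h
        rw [if_pos h, if_pos hi, if_pos hi1, if_pos hi1]
        exact hdyn (i + 1) h
      · have hiN : i = N - 1 := le_antisymm (Nat.le_sub_one_of_lt hi)
          (Nat.le_of_lt_succ (Nat.lt_succ_of_le (Nat.sub_le_of_le_add h)))
        have h1 : ¬ (i + 1 < N) := not_lt.mpr h
        have h2 : ¬ (i < N - 1) := by omega
        have h3 : i + 1 = N := by omega
        rw [if_neg h1, if_pos hi, if_neg h2, if_neg h2, h3]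
    · intro i hi
      simp only [hφ', if_pos hi]
      rcases lt_or_ge (i + 1) N with h | h
      · exact hst (i + 1) h
      · have : i + 1 = N := by omega
        rw [this]; exact hXf𝕏 hterm
    · intro i hi
      simp only [hu']
      rcases lt_or_ge i (N - 1) with h | h
      · rw [if_pos h]; exact hin (i + 1) (by omega)
      · rw [if_neg (not_lt.mpr h)]; exact hv𝕌
    · simp only [hφ', if_neg (lt_irrefl N)]
      exact hvXf
end

section
/- (Control invariance of the union of feasible sets under tail updates.) Assume X_f ⊆ 𝕏 and that X_f is control invariant for the disturbance w(N−1), i.e., for every y ∈ X_f there exists v ∈ 𝕌 with A y + B v + w(N−1) ∈ X_f. Then for every k ∈ ℕ and every x ∈ 𝒳_N(T^k(w)) there exists u ∈ 𝕌 such that A x + B u + (T^k(w))(0) ∈ 𝒳_N(T^{k+1}(w)). In particular, the union ⋃_{k ∈ ℕ} 𝒳_N(T^k(w)) is control invariant for the time-varying perturbed system x(k+1) = A x(k) + B u(k) + (T^k(w))(0) with inputs in 𝕌: any state in the union can be steered, with an admissible input, so that its successor again lies in the union. -/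
open Matrix

lemma step_lemma (n m N : ℕ) (hN : 1 ≤ N)
    (A : Matrix (Fin n) (Fin n) ℝ) (B : Matrix (Fin n) (Fin m) ℝ)
    (𝕏 : Set (Fin n → ℝ)) (𝕌 : Set (Fin m → ℝ)) (Xf : Set (Fin n → ℝ))
    (w : ℕ → (Fin n → ℝ)) (hXf𝕏 : Xf ⊆ 𝕏)
    (hci : ∀ y ∈ Xf, ∃ v ∈ 𝕌, A.mulVec y + B.mulVec v + w (N - 1) ∈ Xf)
    (v : ℕ → (Fin n → ℝ)) (hv : v (N - 1) = w (N - 1))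
    (x : Fin n → ℝ) (hx : x ∈ FeasSet n m N A B 𝕏 𝕌 Xf v) :
    ∃ u ∈ 𝕌, A.mulVec x + B.mulVec u + v 0 ∈ FeasSet n m N A B 𝕏 𝕌 Xf (tailSeq n N v) := by
  obtain ⟨hx𝕏, u, φ, hφ0, hdyn, hmemX, hmemU, hterm⟩ := hx
  obtain ⟨v', hv'U, hv'Xf⟩ := hci (φ N) hterm
  have h1 : φ 1 = A.mulVec x + B.mulVec (u 0) + v 0 := by
    rw [← hφ0]; exact hdyn 0 hN
  refine ⟨u 0, hmemU 0 hN, ?_, ?_⟩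
  · rw [← h1]
    by_cases h : 1 < N
    · exact hmemX 1 h
    · have hN1 : N = 1 := by omega
      exact hXf𝕏 (hN1 ▸ hterm)
  · refine ⟨fun i => if i < N - 1 then u (i + 1) else v',
      fun i => if i ≤ N - 1 then φ (i + 1) else A.mulVec (φ N) + B.mulVec v' + w (N - 1),
      ?_, ?_, ?_, ?_, ?_⟩
    · simp only [Nat.zero_le, if_pos, h1]
    · intro i hi
      by_cases hcase : i < N - 1
      · have hi1 : i + 1 ≤ N - 1 := by omega
        have hi2 : i + 1 < N := by omega
        simp only [if_pos hi1, if_pos (le_of_lt hcase), hcase, if_pos, tailSeq]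
        exact hdyn (i + 1) hi2
      · have hiN : i = N - 1 := by omega
        subst hiN
        have h3 : N - 1 + 1 = N := by omega
        simp only [h3, if_neg (show ¬ N ≤ N - 1 by omega), if_pos (le_refl (N - 1)),
          if_neg hcase, tailSeq, if_neg (lt_irrefl (N - 1)), hv]
    · intro i hi
      have hle : i ≤ N - 1 := by omega
      simp only [if_pos hle]
      by_cases h : i + 1 < N
      · exact hmemX (i + 1) h
      · have : i + 1 = N := by omega
        rw [this]; exact hXf𝕏 hterm
    · intro i hi
      by_cases h : i < N - 1
      · simp only [if_pos h]; exact hmemU (i + 1) (by omega)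
      · simp only [if_neg h]; exact hv'U
    · have h2 : ¬ (N ≤ N - 1) := by omega
      simp only [if_neg h2]; exact hv'Xf

lemma iter_fixed (n N : ℕ) (w : ℕ → (Fin n → ℝ)) (k : ℕ) :
    ((tailSeq n N)^[k] w) (N - 1) = w (N - 1) := by
  induction k with
  | zero => rfl
  | succ k ih =>
    rw [Function.iterate_succ_apply']
    simp only [tailSeq, lt_irrefl, if_neg (lt_irrefl (N - 1))]
    exact ih

/-- **Proposition 2(ii): control invariance of the union of feasible sets under
tail updates.** If `Xf ⊆ 𝕏` and `Xf` is control invariant for the disturbance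
`w(N-1)`, then from any state in `𝒳_N(T^k(w))` there is an admissible input
steering the state into `𝒳_N(T^{k+1}(w))`; in particular the union
`⋃ k, 𝒳_N(T^k(w))` is control invariant for the time-varying perturbed system. -/
theorem union_feasible_sets_control_invariant
    (n m N : ℕ) (hN : 1 ≤ N)
    (A : Matrix (Fin n) (Fin n) ℝ) (B : Matrix (Fin n) (Fin m) ℝ)
    (𝕏 : Set (Fin n → ℝ)) (𝕌 : Set (Fin m → ℝ)) (Xf : Set (Fin n → ℝ))
    (w : ℕ → (Fin n → ℝ))
    (hXf𝕏 : Xf ⊆ 𝕏)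
    (hci : ∀ y ∈ Xf, ∃ v ∈ 𝕌, A.mulVec y + B.mulVec v + w (N - 1) ∈ Xf) :
    (∀ k : ℕ, ∀ x ∈ FeasSet n m N A B 𝕏 𝕌 Xf ((tailSeq n N)^[k] w),
      ∃ u ∈ 𝕌,
        A.mulVec x + B.mulVec u + ((tailSeq n N)^[k] w) 0 ∈
          FeasSet n m N A B 𝕏 𝕌 Xf ((tailSeq n N)^[k + 1] w)) ∧
    (∀ k : ℕ, ∀ x ∈ FeasSet n m N A B 𝕏 𝕌 Xf ((tailSeq n N)^[k] w),
      ∃ u ∈ 𝕌,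
        A.mulVec x + B.mulVec u + ((tailSeq n N)^[k] w) 0 ∈
          ⋃ j : ℕ, FeasSet n m N A B 𝕏 𝕌 Xf ((tailSeq n N)^[j] w)) := by
  have key : ∀ k : ℕ, ∀ x ∈ FeasSet n m N A B 𝕏 𝕌 Xf ((tailSeq n N)^[k] w),
      ∃ u ∈ 𝕌, A.mulVec x + B.mulVec u + ((tailSeq n N)^[k] w) 0 ∈
        FeasSet n m N A B 𝕏 𝕌 Xf ((tailSeq n N)^[k + 1] w) := by
    intro k x hx
    have h := step_lemma n m N hN A B 𝕏 𝕌 Xf w hXf𝕏 hci ((tailSeq n N)^[k] w)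
      (iter_fixed n N w k) x hx
    rwa [← Function.iterate_succ_apply' (tailSeq n N) k w] at h
  refine ⟨key, fun k x hx => ?_⟩
  obtain ⟨u, hu, hm⟩ := key k x hx
  exact ⟨u, hu, Set.mem_iUnion.2 ⟨k + 1, hm⟩⟩
end

section
/- (Sequence core of the robust stability theorem.) Let γ ∈ (0,1), ρ ∈ (γ,1), α > 0, and let v : ℕ → ℝ be a sequence of nonnegative reals satisfying v(k+1) ≤ γ v(k) + (ρ − γ)α for every k. Then: (i) if v(k) > α then v(k+1) ≤ ρ v(k); (ii) for every β ≥ α, if v(0) ≤ β then v(k) ≤ β for all k (invariance of the sublevel threshold β); and (iii) there exists k' ∈ ℕ such that v(k) ≤ α for all k ≥ k' (finite-time entry into, and invariance of, the level α). -/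
/-- **Sequence core of Theorem 1.** If `γ ∈ (0,1)`, `ρ ∈ (γ,1)`, `α > 0` and the
nonnegative sequence `v` satisfies `v(k+1) ≤ γ v(k) + (ρ − γ)α`, then:
(i) `v(k) > α → v(k+1) ≤ ρ * v(k)`; (ii) any threshold `β ≥ α` is invariant:
`v(0) ≤ β → ∀ k, v(k) ≤ β`; (iii) `v` enters and remains below `α` in finite
time. -/
theorem robust_stability_sequence_core
    (γ ρ α : ℝ) (hγ : γ ∈ Set.Ioo (0:ℝ) 1) (hρ : ρ ∈ Set.Ioo γ 1) (hα : 0 < α)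
    (v : ℕ → ℝ) (hvnonneg : ∀ k, 0 ≤ v k)
    (hrec : ∀ k, v (k + 1) ≤ γ * v k + (ρ - γ) * α) :
    (∀ k, α < v k → v (k + 1) ≤ ρ * v k) ∧
    (∀ β : ℝ, α ≤ β → v 0 ≤ β → ∀ k, v k ≤ β) ∧
    (∃ k' : ℕ, ∀ k, k' ≤ k → v k ≤ α) := by
  obtain ⟨hγ0, hγ1⟩ := hγ
  obtain ⟨hργ, hρ1⟩ := hρ
  have hρ0 : 0 < ρ := hγ0.trans hργ
  have hi : ∀ k, α < v k → v (k + 1) ≤ ρ * v k := by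
    intro k hk
    calc v (k + 1) ≤ γ * v k + (ρ - γ) * α := hrec k
      _ ≤ γ * v k + (ρ - γ) * v k := by nlinarith
      _ = ρ * v k := by ring
  have hii : ∀ β : ℝ, α ≤ β → v 0 ≤ β → ∀ k, v k ≤ β := by
    intro β hαβ h0 k
    induction k with
    | zero => exact h0
    | succ n ih =>
      calc v (n + 1) ≤ γ * v n + (ρ - γ) * α := hrec n
        _ ≤ γ * β + (ρ - γ) * β := by nlinarith
        _ = ρ * β := by ring
        _ ≤ β := by nlinarith
  refine ⟨hi, hii, ?_⟩
  -- invariance of level α: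
  have hinv : ∀ n, v n ≤ α → ∀ k, n ≤ k → v k ≤ α := by
    intro n hn k hk
    induction k with
    | zero => simpa [Nat.le_zero.mp hk] using hn
    | succ m ih =>
      rcases Nat.lt_or_ge n (m + 1) with h | h
      · have hm : v m ≤ α := ih (Nat.lt_succ_iff.mp h)
        calc v (m + 1) ≤ γ * v m + (ρ - γ) * α := hrec m
          _ ≤ γ * α + (ρ - γ) * α := by nlinarith
          _ = ρ * α := by ring
          _ ≤ α := by nlinarith
      · have : n = m + 1 := le_antisymm hk h
        simpa [← this] using hn
  -- existence of entry time:
  by_contra hcon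
  push_neg at hcon
  have hall : ∀ k, α < v k := by
    intro k
    by_contra hk
    push_neg at hk
    obtain ⟨m, hm, hvm⟩ := hcon k
    exact absurd (hinv k hk m hm) (not_le.mpr hvm)
  have hgeo : ∀ k, v k ≤ ρ ^ k * v 0 := by
    intro k
    induction k with
    | zero => simp
    | succ m ih =>
      calc v (m + 1) ≤ ρ * v m := hi m (hall m)
        _ ≤ ρ * (ρ ^ m * v 0) := by nlinarith
        _ = ρ ^ (m + 1) * v 0 := by ring
  have htend : Filter.Tendsto (fun k => ρ ^ k * v 0) Filter.atTop (nhds 0) := by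
    simpa using (tendsto_pow_atTop_nhds_zero_of_lt_one hρ0.le hρ1).mul_const (v 0)
  obtain ⟨k, hk⟩ := (htend.eventually (gt_mem_nhds hα)).exists
  exact absurd ((hall k).trans_le (hgeo k)) (not_lt.mpr hk.le)
end

section
/- (Robust positive invariance and finite-time convergence under persistently changing disturbance predictions.) Let γ ∈ (0,1), ρ ∈ (γ,1), α > 0, β ≥ α, λ ≥ 0. Let f : ℝ^n × ((Fin N) → ℝ^n) → ℝ^n be a closed-loop map, V : ℝ^n × ((Fin N) → ℝ^n) → ℝ a nonnegative function, T the tail map on disturbance sequences, and σ : ℝ → ℝ a nondecreasing function with σ(λ) ≤ (ρ − γ)α. Assume: (descent) for all (x, 𝐰) with V(x,𝐰) ≤ β, V(f(x,𝐰), T(𝐰)) ≤ γ V(x,𝐰); (𝒦-continuity in the disturbance) for all x, 𝐰, 𝐰', |V(x,𝐰) − V(x,𝐰')| ≤ σ(‖𝐰 − 𝐰'‖). Let sequences x(k) ∈ ℝ^n and 𝐰(k) satisfy x(k+1) = f(x(k), 𝐰(k)) and ‖𝐰(k+1) − T(𝐰(k))‖ ≤ λ for all k, with V(x(0), 𝐰(0))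 ≤ β. Then V(x(k), 𝐰(k)) ≤ β for all k (the sublevel set Ω_β = {(x,𝐰) : V(x,𝐰) ≤ β} is positively invariant for the composite system), and there exists k' such that V(x(k), 𝐰(k)) ≤ α for all k ≥ k' (the state enters Ω_α in finite time and remains therein). -/
/-- The tail map on disturbance sequences `W : Fin N → ℝ^n`:
`T(W)(i) = W(i+1)` for `i < N-1` and `T(W)(N-1) = W(N-1)`. -/
def tailMap (n N : ℕ) (w : Fin N → EuclideanSpace ℝ (Fin n)) :
    Fin N → EuclideanSpace ℝ (Fin n) :=
  fun i => if h : (i : ℕ) + 1 < N then w ⟨(i : ℕ) + 1, h⟩ else w i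

/-- **Theorem 1 (robust positive invariance and finite-time convergence under
persistently changing disturbance predictions).** Suppose the value function `V`
satisfies the `γ`-descent property under the tail update on the sublevel set
`{V ≤ β}` and is 𝒦-continuous in the disturbance with modulus `sig`, where `sig` is
nondecreasing and `sig(λ) ≤ (ρ − γ)α`. Then along any trajectory
`x(k+1) = f(x(k), W(k))` with `‖W(k+1) − T(W(k))‖ ≤ λ` and `V(x(0),W(0)) ≤ β`,
the sublevel set `Ω_β` is positively invariant and the state enters `Ω_α` in
finite time and remains therein. -/
theorem robust_invariance_finite_time_convergence
    (n N : ℕ) (hN : 1 ≤ N)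
    (γ ρ α β lam : ℝ)
    (hγ : γ ∈ Set.Ioo (0:ℝ) 1) (hρ : ρ ∈ Set.Ioo γ 1) (hα : 0 < α)
    (hβ : α ≤ β) (hlam : 0 ≤ lam)
    (f : EuclideanSpace ℝ (Fin n) × (Fin N → EuclideanSpace ℝ (Fin n)) →
      EuclideanSpace ℝ (Fin n))
    (V : EuclideanSpace ℝ (Fin n) × (Fin N → EuclideanSpace ℝ (Fin n)) → ℝ)
    (hVnonneg : ∀ z, 0 ≤ V z)
    (sig : ℝ → ℝ) (hsigmono : Monotone sig) (hsiglam : sig lam ≤ (ρ - γ) * α)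
    (hdesc : ∀ x W, V (x, W) ≤ β → V (f (x, W), tailMap n N W) ≤ γ * V (x, W))
    (hKcont : ∀ x W W', |V (x, W) - V (x, W')| ≤ sig ‖W - W'‖)
    (x : ℕ → EuclideanSpace ℝ (Fin n))
    (W : ℕ → (Fin N → EuclideanSpace ℝ (Fin n)))
    (hdyn : ∀ k, x (k + 1) = f (x k, W k))
    (hwchange : ∀ k, ‖W (k + 1) - tailMap n N (W k)‖ ≤ lam)
    (hinit : V (x 0, W 0) ≤ β) :
    (∀ k, V (x k, W k) ≤ β) ∧
    (∃ k' : ℕ, ∀ k, k' ≤ k → V (x k, W k) ≤ α) := by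

  obtain ⟨hγ0, hγ1⟩ := hγ
  obtain ⟨hργ, hρ1⟩ := hρ
  have hρ0 : 0 < ρ := lt_trans hγ0 hργ
  have hβ0 : 0 ≤ β := le_trans hα.le hβ
  -- one-step bound
  have step : ∀ k, V (x k, W k) ≤ β →
      V (x (k+1), W (k+1)) ≤ γ * V (x k, W k) + (ρ - γ) * α := by
    intro k hk
    have h1 := hdesc (x k) (W k) hk
    rw [← hdyn k] at h1
    have h2 := (abs_le.mp (hKcont (x (k+1)) (W (k+1)) (tailMap n N (W k)))).2
    have h3 : sig ‖W (k+1) - tailMap n N (W k)‖ ≤ sig lam := hsigmono (hwchange k)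
    linarith
  -- main inductive bound
  have main : ∀ k, V (x k, W k) ≤ max α (ρ ^ k * β) := by
    intro k
    induction k with
    | zero => simpa using le_max_of_le_right hinit
    | succ k ih =>
      have hpow1 : ρ ^ k ≤ 1 := pow_le_one₀ hρ0.le hρ1.le
      have hpowβ : ρ ^ k * β ≤ β := by nlinarith
      have hkβ : V (x k, W k) ≤ β := le_trans ih (by simp [hβ, hpowβ])
      have hstep := step k hkβ
      rcases le_total (ρ ^ k * β) α with hc | hc
      · have hVα : V (x k, W k) ≤ α := le_trans ih (by simp [hc])
        have : V (x (k+1), W (k+1)) ≤ α := by nlinarith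
        exact le_max_of_le_left this
      · have hVp : V (x k, W k) ≤ ρ ^ k * β := le_trans ih (by simp [hc])
        have : V (x (k+1), W (k+1)) ≤ ρ ^ (k+1) * β := by
          rw [pow_succ]; nlinarith
        exact le_max_of_le_right this
  constructor
  · intro k
    refine le_trans (main k) (max_le hβ ?_)
    have hpow1 : ρ ^ k ≤ 1 := pow_le_one₀ hρ0.le hρ1.le
    nlinarith
  · obtain ⟨k', hk'⟩ := exists_pow_lt_of_lt_one (div_pos hα (lt_of_lt_of_le hα hβ)) hρ1
    refine ⟨k', fun k hk => ?_⟩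
    have hpow : ρ ^ k ≤ ρ ^ k' := pow_le_pow_of_le_one hρ0.le hρ1.le hk
    have hβpos : 0 < β := lt_of_lt_of_le hα hβ
    have : ρ ^ k * β ≤ α := by
      have := (lt_div_iff₀ hβpos).mp hk'
      nlinarith [pow_nonneg hρ0.le k]
    exact le_trans (main k) (max_le le_rfl this)
end
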